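/- Let n ≥ 2 and let G₁ and G₂ be simple graphs on Fin n. Then G₁ and G₂ are isomorphic (there exists a graph isomorphism G₁ ≃g G₂) if and only if there exists a linear isometry equivalence L of EuclideanSpace ℝ (Fin n) such that L '' S(G₁) = S(G₂), where S(G) = {s i : i ∈ Fin n} ∪ {(s i + s j)/2 : G.Adj i j} is the point-set form of G built from the centered standard simplex vertices s. (Graph isomorphism is equivalent to exact rigid point set registration of the point-set forms.) -/

import Mathlib

/-- The centered standard simplex vertices: `s i = e_i - (1/n) • ∑ j, e_j`,
where `e_i` is the standard basis of `EuclideanSpace ℝ (Fin n)`. -/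
noncomputable def simplexPt (n : ℕ) (i : Fin n) : EuclideanSpace ℝ (Fin n) :=
  EuclideanSpace.single i (1 : ℝ) - ((1 : ℝ) / n) • ∑ j, EuclideanSpace.single j (1 : ℝ)

/-- The coordinate-permutation map `M_σ` (the permutation matrix of `σ`), as a linear
isometry equivalence of `EuclideanSpace ℝ (Fin n)`. -/
noncomputable def Mperm (n : ℕ) (σ : Equiv.Perm (Fin n)) :
    EuclideanSpace ℝ (Fin n) ≃ₗᵢ[ℝ] EuclideanSpace ℝ (Fin n) :=
  LinearIsometryEquiv.piLpCongrLeft 2 ℝ ℝ σ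

/-- The point-set form of a simple graph `G` on `Fin n`:
`S(G) = {s i : i} ∪ {(s i + s j)/2 : G.Adj i j}`. -/
noncomputable def pointSet (n : ℕ) (G : SimpleGraph (Fin n)) :
    Set (EuclideanSpace ℝ (Fin n)) :=
  Set.range (simplexPt n) ∪
    {p | ∃ i j : Fin n, G.Adj i j ∧ p = (2 : ℝ)⁻¹ • (simplexPt n i + simplexPt n j)}

/-!
A linear isometry preserves norms, and in `pointSet n G` the vertices `s i` have squared norm
`1 - 1/n` while the edge midpoints have squared norm `1/2 - 1/n`. So an isometry matching the
point sets permutes the vertices, hence maps the midpoint of `s i, s j` to the midpoint of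
`s (σ i), s (σ j)`; as a midpoint `(s i + s j)/2` with `i ≠ j` determines the pair `{i, j}`, the
point set determines the graph and `σ` is an isomorphism. Conversely, the coordinate permutation
of an isomorphism maps one point set onto the other.
-/

open RealInnerProductSpace

section

variable {n : ℕ}

lemma simplexPt_apply (i k : Fin n) :
    simplexPt n i k = (if k = i then 1 else 0) - 1 / n := by
  simp [simplexPt, PiLp.single_apply, WithLp.ofLp_sum, Finset.sum_apply]

lemma inner_simplexPt (i j : Fin n) :
    ⟪simplexPt n i, simplexPt n j⟫ = (if i = j then 1 else 0) - 1 / n := by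
  have hn : (n : ℝ) ≠ 0 := Nat.cast_ne_zero.2 i.pos.ne'
  simp [PiLp.inner_apply, simplexPt_apply, sub_mul, mul_sub, Finset.sum_sub_distrib, ite_mul,
    mul_ite]
  field_simp
  ring

lemma norm_sq_simplexPt (i : Fin n) : ‖simplexPt n i‖ ^ 2 = 1 - 1 / n := by
  rw [← real_inner_self_eq_norm_sq, inner_simplexPt, if_pos rfl]

lemma norm_sq_midpoint_simplexPt {i j : Fin n} (hij : i ≠ j) :
    ‖(2 : ℝ)⁻¹ • (simplexPt n i + simplexPt n j)‖ ^ 2 = 1 / 2 - 1 / n := by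
  rw [norm_smul, mul_pow, norm_add_sq_real, norm_sq_simplexPt, norm_sq_simplexPt,
    inner_simplexPt, if_neg hij]
  norm_num
  ring

lemma simplexPt_injective : Function.Injective (simplexPt n) := by
  intro i j h
  by_contra hij
  simpa [simplexPt_apply, hij] using congr($h i)

lemma sym2_eq_of_simplexPt_add_simplexPt_eq {i j k l : Fin n} (hij : i ≠ j)
    (h : simplexPt n i + simplexPt n j = simplexPt n k + simplexPt n l) :
    s(i, j) = s(k, l) := by
  have hcoord (m : Fin n) : ((if m = i then 1 else 0) + (if m = j then 1 else 0) : ℝ) =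
      (if m = k then 1 else 0) + (if m = l then 1 else 0) := by
    have := congr($h m)
    simp only [PiLp.add_apply, simplexPt_apply] at this
    linarith
  have hi := hcoord i
  have hj := hcoord j
  rw [Sym2.eq_iff]
  split_ifs at hi hj <;> grind

lemma Mperm_simplexPt (σ : Equiv.Perm (Fin n)) (i : Fin n) :
    Mperm n σ (simplexPt n i) = simplexPt n (σ i) := by
  simp only [simplexPt, Mperm, map_sub, map_smul, map_sum, EuclideanSpace.piLpCongrLeft_single]
  rw [Equiv.sum_comp σ (fun j => EuclideanSpace.single j (1 : ℝ))]

lemma adj_iff_midpoint_mem_pointSet (G : SimpleGraph (Fin n)) (i j : Fin n) :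
    G.Adj i j ↔ i ≠ j ∧ (2 : ℝ)⁻¹ • (simplexPt n i + simplexPt n j) ∈ pointSet n G := by
  refine ⟨fun h => ⟨h.ne, Or.inr ⟨i, j, h, rfl⟩⟩, ?_⟩
  rintro ⟨hij, ⟨k, hk⟩ | ⟨k, l, hkl, hm⟩⟩
  · have := norm_sq_midpoint_simplexPt (n := n) hij
    rw [← hk, norm_sq_simplexPt] at this
    norm_num at this
  · have hsum := smul_right_injective _ (inv_ne_zero two_ne_zero) hm
    rwa [← G.mem_edgeSet, sym2_eq_of_simplexPt_add_simplexPt_eq hij hsum]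

lemma pointSet_injective : Function.Injective (pointSet n) := by
  intro G H h
  ext i j
  rw [adj_iff_midpoint_mem_pointSet, h, ← adj_iff_midpoint_mem_pointSet]

lemma mem_range_simplexPt_of_mem_pointSet {G : SimpleGraph (Fin n)}
    {p : EuclideanSpace ℝ (Fin n)} (hp : p ∈ pointSet n G) {i : Fin n}
    (hnorm : ‖p‖ = ‖simplexPt n i‖) :
    p ∈ Set.range (simplexPt n) := by
  rcases hp with hp | ⟨k, l, hkl, rfl⟩
  · exact hp
  · have := congr($hnorm ^ 2)
    rw [norm_sq_midpoint_simplexPt hkl.ne, norm_sq_simplexPt] at this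
    norm_num at this

lemma image_pointSet_of_iso {F : Type*}
    [FunLike F (EuclideanSpace ℝ (Fin n)) (EuclideanSpace ℝ (Fin n))]
    [LinearMapClass F ℝ (EuclideanSpace ℝ (Fin n)) (EuclideanSpace ℝ (Fin n))] (L : F)
    {G₁ G₂ : SimpleGraph (Fin n)} (e : G₁ ≃g G₂)
    (hL : ∀ i, L (simplexPt n i) = simplexPt n (e i)) :
    L '' pointSet n G₁ = pointSet n G₂ := by
  have hmid (i j : Fin n) : L ((2 : ℝ)⁻¹ • (simplexPt n i + simplexPt n j)) =
      (2 : ℝ)⁻¹ • (simplexPt n (e i) + simplexPt n (e j)) := by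
    rw [map_smul, map_add, hL, hL]
  rw [pointSet, pointSet, Set.image_union, ← Set.range_comp]
  congr 1
  · rw [show ⇑L ∘ simplexPt n = simplexPt n ∘ e from funext hL, e.surjective.range_comp]
  · ext p
    constructor
    · rintro ⟨_, ⟨i, j, h, rfl⟩, rfl⟩
      exact ⟨e i, e j, e.map_adj_iff.2 h, hmid i j⟩
    · rintro ⟨k, l, h, rfl⟩
      refine ⟨_, ⟨e.symm k, e.symm l, e.symm.map_adj_iff.2 h, rfl⟩, ?_⟩
      rw [hmid, e.apply_symm_apply, e.apply_symm_apply]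

lemma exists_perm_simplexPt_of_image_pointSet_subset
    (L : EuclideanSpace ℝ (Fin n) →ₗᵢ[ℝ] EuclideanSpace ℝ (Fin n)) {G₁ G₂ : SimpleGraph (Fin n)}
    (hL : L '' pointSet n G₁ ⊆ pointSet n G₂) :
    ∃ σ : Equiv.Perm (Fin n), ∀ i, L (simplexPt n i) = simplexPt n (σ i) := by
  have hvertex (i : Fin n) : ∃ k, simplexPt n k = L (simplexPt n i) :=
    mem_range_simplexPt_of_mem_pointSet (hL ⟨_, Or.inl ⟨i, rfl⟩, rfl⟩) (L.norm_map _)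
  choose σ hσ using hvertex
  have hσinj : Function.Injective σ := fun a b hab =>
    simplexPt_injective (L.injective (by rw [← hσ, ← hσ, hab]))
  exact ⟨Equiv.ofBijective σ hσinj.bijective_of_finite, fun i => (hσ i).symm⟩

end

theorem isomorphic_iff_exists_isometry_registration_general
    (n : ℕ) (G₁ G₂ : SimpleGraph (Fin n)) :
    Nonempty (G₁ ≃g G₂) ↔
      ∃ L : EuclideanSpace ℝ (Fin n) ≃ₗᵢ[ℝ] EuclideanSpace ℝ (Fin n),
        L '' pointSet n G₁ = pointSet n G₂ := by
  constructor
  · rintro ⟨e⟩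
    exact ⟨Mperm n e.toEquiv, image_pointSet_of_iso _ e (Mperm_simplexPt e.toEquiv)⟩
  · rintro ⟨L, hL⟩
    obtain ⟨σ, hσ⟩ := exists_perm_simplexPt_of_image_pointSet_subset L.toLinearIsometry hL.le
    have hmap : G₁.map σ = G₂ :=
      pointSet_injective ((image_pointSet_of_iso L (SimpleGraph.Iso.map σ G₁) hσ).symm.trans hL)
    exact ⟨hmap ▸ SimpleGraph.Iso.map σ G₁⟩

theorem isomorphic_iff_exists_isometry_registration
    (n : ℕ) (hn : 2 ≤ n) (G₁ G₂ : SimpleGraph (Fin n)) :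
    Nonempty (G₁ ≃g G₂) ↔
      ∃ L : EuclideanSpace ℝ (Fin n) ≃ₗᵢ[ℝ] EuclideanSpace ℝ (Fin n),
        L '' pointSet n G₁ = pointSet n G₂ :=
  isomorphic_iff_exists_isometry_registration_general n G₁ G₂
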